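/- Let K ⊆ ℝⁿ be a nonempty closed set and f = (f_1,…,f_q) a vector polynomial. (i) If SOL^s(K, f) ≠ ∅, then there exist x̄ ∈ K and a nonempty closed set S ⊆ ℝⁿ with (K_x̄)_∞ ⊆ S_∞ ⊆ K_∞ such that SOL^s(S_∞, f^∞) ≠ ∅. (ii) If SOL^w(K, f) ≠ ∅, then there exist x̄ ∈ K and a nonempty closed set S ⊆ ℝⁿ with (K_x̄)_∞ ⊆ S_∞ ⊆ K_∞ such that SOL^w(S_∞, f^∞) ≠ ∅. -/

import Mathlib

open Filter Topology MvPolynomial Bornology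

noncomputable section

/-- The asymptotic (recession) cone of a set `A ⊆ ℝⁿ`. -/
def asymCone {n : ℕ} (A : Set (Fin n → ℝ)) : Set (Fin n → ℝ) :=
  {v | ∃ (t : ℕ → ℝ) (x : ℕ → (Fin n → ℝ)),
    Filter.Tendsto t Filter.atTop Filter.atTop ∧ (∀ k, x k ∈ A) ∧
    Filter.Tendsto (fun k => (t k)⁻¹ • x k) Filter.atTop (nhds v)}

/-- Pareto efficient solutions of the vector map `g` on `C`. -/
def SOLs {n q : ℕ} (C : Set (Fin n → ℝ)) (g : Fin q → (Fin n → ℝ) → ℝ) :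
    Set (Fin n → ℝ) :=
  {x | x ∈ C ∧ ¬ ∃ y ∈ C, (∀ i, g i y ≤ g i x) ∧ (∃ i, g i y ≠ g i x)}

/-- Weak Pareto efficient solutions of the vector map `g` on `C`. -/
def SOLw {n q : ℕ} (C : Set (Fin n → ℝ)) (g : Fin q → (Fin n → ℝ) → ℝ) :
    Set (Fin n → ℝ) :=
  {x | x ∈ C ∧ ¬ ∃ y ∈ C, ∀ i, g i y < g i x}

/-- Global minimizers of a scalar function `p` on `C`. -/
def SOLmin {n : ℕ} (C : Set (Fin n → ℝ)) (p : (Fin n → ℝ) → ℝ) :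
    Set (Fin n → ℝ) :=
  {x | x ∈ C ∧ ∀ y ∈ C, p x ≤ p y}

/-- The recession polynomial (leading term: top-degree homogeneous part) of a
polynomial, as a function on `ℝⁿ`. -/
noncomputable def recPoly {n : ℕ} (p : MvPolynomial (Fin n) ℝ) : (Fin n → ℝ) → ℝ :=
  fun x => MvPolynomial.eval x (MvPolynomial.homogeneousComponent p.totalDegree p)

/-
Take `x̄` efficient for `f` on `K` and `S = K_x̄`. Then `0` is efficient for `f^∞` on `S_∞`:
if `v ∈ S_∞` has `f_j^∞(v) < f_j^∞(0)`, then `d_j ≥ 1`, so `f_j^∞(v) < 0`. Along `x_k ∈ S`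
with `x_k / t_k → v` we get `f_j(x_k) / t_k^{d_j} → f_j^∞(v) < 0`, so `f_j(x_k) → -∞` and some
`x_k ∈ K_x̄` strictly improves on `x̄` in the `j`-th objective. The weak case is the same with
all objectives at once.
-/

theorem MvPolynomial.IsHomogeneous.eval_smul {σ R : Type*} [Fintype σ] [CommSemiring R]
    {φ : MvPolynomial σ R} {d : ℕ} (hφ : φ.IsHomogeneous d) (c : R) (x : σ → R) :
    eval (c • x) φ = c ^ d * eval x φ := by
  rw [eval_eq', eval_eq', Finset.mul_sum]
  refine Finset.sum_congr rfl fun μ hμ => ?_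
  have hμd : ∑ i, μ i = d := by
    rw [← hφ (mem_support_iff.mp hμ), Finsupp.weight_apply]
    simp only [Pi.one_apply, smul_eq_mul, mul_one]
    exact (Finsupp.sum_fintype μ (fun _ c => c) fun _ => rfl).symm
  simp only [Pi.smul_apply, smul_eq_mul, mul_pow, Finset.prod_mul_distrib,
    Finset.prod_pow_eq_pow_sum, hμd]
  ring

lemma recPoly_smul {n : ℕ} (p : MvPolynomial (Fin n) ℝ) (c : ℝ) (x : Fin n → ℝ) :
    recPoly p (c • x) = c ^ p.totalDegree * recPoly p x :=
  (homogeneousComponent_isHomogeneous _ p).eval_smul c x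

lemma recPoly_zero {n : ℕ} {p : MvPolynomial (Fin n) ℝ} (hp : 1 ≤ p.totalDegree) :
    recPoly p 0 = 0 := by
  simpa [zero_pow (by omega : p.totalDegree ≠ 0)] using recPoly_smul p 0 0

lemma one_le_totalDegree_of_recPoly_lt {n : ℕ} {p : MvPolynomial (Fin n) ℝ} {v : Fin n → ℝ}
    (hv : recPoly p v < recPoly p 0) : 1 ≤ p.totalDegree := by
  by_contra! hp
  have h := recPoly_smul p 0 v
  rw [zero_smul, Nat.lt_one_iff.mp hp, pow_zero, one_mul] at h
  exact hv.ne' h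

lemma eval_smul_div_pow_totalDegree {n : ℕ} (p : MvPolynomial (Fin n) ℝ) {t : ℝ} (ht : t ≠ 0)
    (u : Fin n → ℝ) :
    eval (t • u) p / t ^ p.totalDegree = ∑ d ∈ Finset.range (p.totalDegree + 1),
      t⁻¹ ^ (p.totalDegree - d) * eval u (homogeneousComponent d p) := by
  conv_lhs => enter [1]; rw [← sum_homogeneousComponent p]
  rw [map_sum, Finset.sum_div]
  refine Finset.sum_congr rfl fun d hd => ?_
  rw [(homogeneousComponent_isHomogeneous d p).eval_smul,
    ← pow_sub_mul_pow t (Nat.lt_succ_iff.mp (Finset.mem_range.mp hd)), inv_pow]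
  field_simp

lemma tendsto_eval_div_pow_totalDegree {n : ℕ} (p : MvPolynomial (Fin n) ℝ) {t : ℕ → ℝ}
    {x : ℕ → Fin n → ℝ} {v : Fin n → ℝ} (ht : Tendsto t atTop atTop)
    (hx : Tendsto (fun k => (t k)⁻¹ • x k) atTop (𝓝 v)) :
    Tendsto (fun k => eval (x k) p / t k ^ p.totalDegree) atTop (𝓝 (recPoly p v)) := by
  set D := p.totalDegree
  -- `G (s, u) = s ^ D * p (s⁻¹ • u)` for `s ≠ 0`, and `G (0, ·) = p^∞`.
  let G : ℝ × (Fin n → ℝ) → ℝ := fun su =>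
    ∑ d ∈ Finset.range (D + 1), su.1 ^ (D - d) * eval su.2 (homogeneousComponent d p)
  have hG : Continuous G := continuous_finsetSum _ fun d _ =>
    (continuous_fst.pow _).mul ((continuous_eval _).comp continuous_snd)
  have hG0 : G (0, v) = recPoly p v := by
    refine (Finset.sum_eq_single_of_mem D (Finset.self_mem_range_succ D) fun d hd hdD => ?_).trans
      (by simp [D, recPoly])
    rw [zero_pow (by have := Finset.mem_range.mp hd; omega), zero_mul]
  have hlim := (hG.tendsto (0, v)).comp ((tendsto_inv_atTop_zero.comp ht).prodMk_nhds hx)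
  rw [hG0] at hlim
  refine hlim.congr' ?_
  filter_upwards [ht.eventually_gt_atTop 0] with k hk
  have h := eval_smul_div_pow_totalDegree p hk.ne' ((t k)⁻¹ • x k)
  rw [smul_inv_smul₀ hk.ne'] at h
  exact h.symm

lemma tendsto_eval_atBot_of_recPoly_lt {n : ℕ} {p : MvPolynomial (Fin n) ℝ} {t : ℕ → ℝ}
    {x : ℕ → Fin n → ℝ} {v : Fin n → ℝ} (ht : Tendsto t atTop atTop)
    (hx : Tendsto (fun k => (t k)⁻¹ • x k) atTop (𝓝 v)) (hv : recPoly p v < recPoly p 0) :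
    Tendsto (fun k => eval (x k) p) atTop atBot := by
  have hp := one_le_totalDegree_of_recPoly_lt hv
  rw [recPoly_zero hp] at hv
  refine ((tendsto_eval_div_pow_totalDegree p ht hx).neg_mul_atTop hv
    ((tendsto_pow_atTop (Nat.one_le_iff_ne_zero.mp hp)).comp ht)).congr' ?_
  filter_upwards [ht.eventually_gt_atTop 0] with k hk
  exact div_mul_cancel₀ _ (pow_ne_zero _ hk.ne')

lemma zero_mem_asymCone {n : ℕ} {A : Set (Fin n → ℝ)} (hA : A.Nonempty) :
    (0 : Fin n → ℝ) ∈ asymCone A := by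
  obtain ⟨a, ha⟩ := hA
  have ht : Tendsto (fun k : ℕ => (k : ℝ) + 1) atTop atTop :=
    tendsto_atTop_add_const_right _ _ tendsto_natCast_atTop_atTop
  exact ⟨_, fun _ => a, ht, fun _ => ha,
    by simpa using (tendsto_inv_atTop_zero.comp ht).smul_const a⟩

lemma asymCone_mono {n : ℕ} {A B : Set (Fin n → ℝ)} (h : A ⊆ B) : asymCone A ⊆ asymCone B :=
  fun _ ⟨t, x, ht, hx, hlim⟩ => ⟨t, x, ht, fun k => h (hx k), hlim⟩

lemma exists_mem_eval_lt_of_mem_asymCone {n : ℕ} {ι : Type*} [Finite ι] {A : Set (Fin n → ℝ)}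
    {g : ι → MvPolynomial (Fin n) ℝ} {v : Fin n → ℝ} (hv : v ∈ asymCone A)
    (hg : ∀ i, recPoly (g i) v < recPoly (g i) 0) (c : ι → ℝ) :
    ∃ x ∈ A, ∀ i, eval x (g i) < c i := by
  obtain ⟨t, x, ht, hxA, hlim⟩ := hv
  have hev : ∀ᶠ k in atTop, ∀ i, eval (x k) (g i) < c i := eventually_all.mpr fun i =>
    (tendsto_eval_atBot_of_recPoly_lt ht hlim (hg i)).eventually_lt_atBot (c i)
  obtain ⟨k, hk⟩ := hev.exists
  exact ⟨x k, hxA k, hk⟩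

section Sublevel

variable {n q : ℕ} {K : Set (Fin n → ℝ)} {f : Fin q → MvPolynomial (Fin n) ℝ} {xbar : Fin n → ℝ}

lemma isClosed_sublevel (hK : IsClosed K) (xbar : Fin n → ℝ) :
    IsClosed {x ∈ K | ∀ j, eval x (f j) ≤ eval xbar (f j)} := by
  refine hK.inter (?_ : IsClosed {x | ∀ j, eval x (f j) ≤ eval xbar (f j)})
  rw [Set.ofPred_forall]
  exact isClosed_iInter fun j => isClosed_le (continuous_eval _) continuous_const

lemma sublevel_nonempty (hx : xbar ∈ K) :
    {x ∈ K | ∀ j, eval x (f j) ≤ eval xbar (f j)}.Nonempty :=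
  ⟨xbar, hx, fun _ => le_rfl⟩

lemma zero_mem_SOLs_asymCone_sublevel (hx : xbar ∈ SOLs K (fun i x => eval x (f i))) :
    0 ∈ SOLs (asymCone {x ∈ K | ∀ j, eval x (f j) ≤ eval xbar (f j)})
      (fun i => recPoly (f i)) := by
  refine ⟨zero_mem_asymCone (sublevel_nonempty hx.1), ?_⟩
  rintro ⟨v, hv, hle, j, hne⟩
  obtain ⟨y, ⟨hyK, hyle⟩, hlt⟩ := exists_mem_eval_lt_of_mem_asymCone hv
    (g := fun _ : Unit => f j) (fun _ => (hle j).lt_of_ne hne) fun _ => eval xbar (f j)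
  exact hx.2 ⟨y, hyK, hyle, j, (hlt ()).ne⟩

lemma zero_mem_SOLw_asymCone_sublevel (hx : xbar ∈ SOLw K (fun i x => eval x (f i))) :
    0 ∈ SOLw (asymCone {x ∈ K | ∀ j, eval x (f j) ≤ eval xbar (f j)})
      (fun i => recPoly (f i)) := by
  refine ⟨zero_mem_asymCone (sublevel_nonempty hx.1), ?_⟩
  rintro ⟨v, hv, hlt⟩
  obtain ⟨y, ⟨hyK, -⟩, hylt⟩ := exists_mem_eval_lt_of_mem_asymCone hv hlt fun j => eval xbar (f j)
  exact hx.2 ⟨y, hyK, hylt⟩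

end Sublevel

theorem stmt10_general {n q : ℕ} (K : Set (Fin n → ℝ)) (hKcl : IsClosed K)
    (f : Fin q → MvPolynomial (Fin n) ℝ) :
    ((SOLs K (fun i x => eval x (f i))).Nonempty →
      ∃ xbar ∈ K, ∃ S : Set (Fin n → ℝ), S.Nonempty ∧ IsClosed S ∧
        asymCone {x ∈ K | ∀ j, eval x (f j) ≤ eval xbar (f j)} ⊆ asymCone S ∧
        asymCone S ⊆ asymCone K ∧
        (SOLs (asymCone S) (fun i => recPoly (f i))).Nonempty) ∧
    ((SOLw K (fun i x => eval x (f i))).Nonempty →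
      ∃ xbar ∈ K, ∃ S : Set (Fin n → ℝ), S.Nonempty ∧ IsClosed S ∧
        asymCone {x ∈ K | ∀ j, eval x (f j) ≤ eval xbar (f j)} ⊆ asymCone S ∧
        asymCone S ⊆ asymCone K ∧
        (SOLw (asymCone S) (fun i => recPoly (f i))).Nonempty) := by
  constructor
  · rintro ⟨xbar, hx⟩
    exact ⟨xbar, hx.1, _, sublevel_nonempty hx.1, isClosed_sublevel hKcl xbar, subset_rfl,
      asymCone_mono (Set.sep_subset _ _), 0, zero_mem_SOLs_asymCone_sublevel hx⟩
  · rintro ⟨xbar, hx⟩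
    exact ⟨xbar, hx.1, _, sublevel_nonempty hx.1, isClosed_sublevel hKcl xbar, subset_rfl,
      asymCone_mono (Set.sep_subset _ _), 0, zero_mem_SOLw_asymCone_sublevel hx⟩

theorem stmt10 {n q : ℕ} (K : Set (Fin n → ℝ)) (hKne : K.Nonempty) (hKcl : IsClosed K)
    (f : Fin q → MvPolynomial (Fin n) ℝ) (hdeg : ∀ i, 1 ≤ (f i).totalDegree) :
    ((SOLs K (fun i x => eval x (f i))).Nonempty →
      ∃ xbar ∈ K, ∃ S : Set (Fin n → ℝ), S.Nonempty ∧ IsClosed S ∧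
        asymCone {x ∈ K | ∀ j, eval x (f j) ≤ eval xbar (f j)} ⊆ asymCone S ∧
        asymCone S ⊆ asymCone K ∧
        (SOLs (asymCone S) (fun i => recPoly (f i))).Nonempty) ∧
    ((SOLw K (fun i x => eval x (f i))).Nonempty →
      ∃ xbar ∈ K, ∃ S : Set (Fin n → ℝ), S.Nonempty ∧ IsClosed S ∧
        asymCone {x ∈ K | ∀ j, eval x (f j) ≤ eval xbar (f j)} ⊆ asymCone S ∧
        asymCone S ⊆ asymCone K ∧
        (SOLw (asymCone S) (fun i => recPoly (f i))).Nonempty) :=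
  stmt10_general K hKcl f
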